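/- Let λ > 0 and define for vectors φ, ψ ∈ ℝ^N the sums Ĵ_{k,1} = Σ_{i=1}^{k} Σ_{j=i}^{k} (−2i + 2k) φ_i ψ_j λ^{−2i+2k} and J_{k,1} = Σ_{i=1}^{k} Σ_{j=i}^{k} φ_i ψ_j λ^{−2i+2k}, R_{k,1} = λ^{2k} Σ_{i=1}^{k} (−2i) φ_i λ^{−2i}, P_{k,1} = λ^{2k} Σ_{i=1}^{k} φ_i λ^{−2i}. Then for 2 ≤ k ≤ N: Ĵ_{k,1} = λ²(Ĵ_{k−1,1} + 2 J_{k−1,1}) + ψ_k (R_{k,1} + 2k P_{k,1}), with Ĵ_{1,1} = 0. -/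

import Mathlib

/-!
Passing from `k` to `k + 1` multiplies each old weight `lam ^ (2k - 2i)` by `lam ^ 2` and raises its
coefficient `2k - 2i` by `2`, which accounts for `lam ^ 2 * (Ĵ k + 2 J k)`. The new column `j = k + 1`
contributes `ψ (k + 1) * ∑ i, (2(k + 1) - 2i) φ i lam ^ (2(k + 1) - 2i)`, which is
`ψ (k + 1) * (R (k + 1) + 2(k + 1) P (k + 1))`.
-/

open Finset

theorem sum_Icc_Icc_succ_top {M : Type*} [AddCommMonoid M] (F : ℕ → ℕ → M) {a k : ℕ}
    (h : a ≤ k + 1) :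
    ∑ i ∈ Icc a (k + 1), ∑ j ∈ Icc i (k + 1), F i j =
      ∑ i ∈ Icc a k, ∑ j ∈ Icc i k, F i j + ∑ i ∈ Icc a (k + 1), F i (k + 1) := by
  have inner : ∀ i ∈ Icc a k, ∑ j ∈ Icc i (k + 1), F i j = ∑ j ∈ Icc i k, F i j + F i (k + 1) :=
    fun i hi => sum_Icc_succ_top (by grind) _
  rw [sum_Icc_succ_top h, sum_Icc_succ_top h, sum_congr rfl inner, sum_add_distrib, Icc_self,
    sum_singleton, add_assoc]

section Weights

variable {K : Type*} [Field K] (lam : K)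

theorem zpow_neg_two_mul_add_two_mul_succ {i k : ℕ} (h : i ≤ k) :
    lam ^ (-2 * (i : ℤ) + 2 * ((k : ℤ) + 1)) = lam ^ 2 * lam ^ (-2 * (i : ℤ) + 2 * (k : ℤ)) := by
  rw [← zpow_natCast, ← zpow_add' (.inr (.inl (by omega)))]
  ring_nf

/-- The splitting `lam ^ (a + b) = lam ^ a * lam ^ b` fails only for `lam = 0` and `a + b = 0`,
where the coefficient vanishes. -/
theorem intCast_add_mul_zpow_add (a b : ℤ) :
    ((a + b : ℤ) : K) * lam ^ (a + b) = ((a + b : ℤ) : K) * (lam ^ a * lam ^ b) := by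
  rcases eq_or_ne (a + b) 0 with h | h
  · simp [h]
  · rw [zpow_add' (.inr (.inl h))]

end Weights

theorem Jhat1_recurrence_general (N : ℕ) (lam : ℝ) (φ ψ : ℕ → ℝ)
    (Jhat J R P : ℕ → ℝ)
    (hJhat : ∀ k, Jhat k = ∑ i ∈ Finset.Icc 1 k, ∑ j ∈ Finset.Icc i k,
        (-2 * (i : ℝ) + 2 * (k : ℝ)) * φ i * ψ j * lam ^ (-2 * (i : ℤ) + 2 * (k : ℤ)))
    (hJ : ∀ k, J k = ∑ i ∈ Finset.Icc 1 k, ∑ j ∈ Finset.Icc i k,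
        φ i * ψ j * lam ^ (-2 * (i : ℤ) + 2 * (k : ℤ)))
    (hR : ∀ k, R k = lam ^ (2 * (k : ℤ)) * ∑ i ∈ Finset.Icc 1 k,
        (-2 * (i : ℝ)) * φ i * lam ^ (-2 * (i : ℤ)))
    (hP : ∀ k, P k = lam ^ (2 * (k : ℤ)) * ∑ i ∈ Finset.Icc 1 k,
        φ i * lam ^ (-2 * (i : ℤ))) :
    (∀ k, 2 ≤ k → k ≤ N →
        Jhat k = lam ^ 2 * (Jhat (k - 1) + 2 * J (k - 1)) +
          ψ k * (R k + 2 * (k : ℝ) * P k)) ∧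
    Jhat 1 = 0 := by
  refine ⟨fun k hk _ => ?_, by simp [hJhat]⟩
  obtain ⟨m, rfl⟩ : ∃ m, k = m + 1 := ⟨k - 1, by omega⟩
  rw [hJhat, sum_Icc_Icc_succ_top _ (by omega), Nat.add_sub_cancel, hJhat, hJ, hR, hP]
  push_cast
  congr 1
  · simp only [mul_add (lam ^ 2), mul_sum, ← sum_add_distrib]
    refine sum_congr rfl fun i hi => sum_congr rfl fun j _ => ?_
    rw [zpow_neg_two_mul_add_two_mul_succ lam (mem_Icc.1 hi).2]
    ring
  · simp only [mul_sum, ← sum_add_distrib]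
    refine sum_congr rfl fun i _ => ?_
    have hw := intCast_add_mul_zpow_add lam (-2 * i) (2 * (m + 1))
    push_cast at hw
    linear_combination φ i * ψ (m + 1) * hw

/-- Recurrence for the weighted double sums `Ĵ_{k,1}` in FTVP-2. -/
theorem Jhat1_recurrence (N : ℕ) (lam : ℝ) (hlam : 0 < lam) (φ ψ : ℕ → ℝ)
    (Jhat J R P : ℕ → ℝ)
    (hJhat : ∀ k, Jhat k = ∑ i ∈ Finset.Icc 1 k, ∑ j ∈ Finset.Icc i k,
        (-2 * (i : ℝ) + 2 * (k : ℝ)) * φ i * ψ j * lam ^ (-2 * (i : ℤ) + 2 * (k : ℤ)))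
    (hJ : ∀ k, J k = ∑ i ∈ Finset.Icc 1 k, ∑ j ∈ Finset.Icc i k,
        φ i * ψ j * lam ^ (-2 * (i : ℤ) + 2 * (k : ℤ)))
    (hR : ∀ k, R k = lam ^ (2 * (k : ℤ)) * ∑ i ∈ Finset.Icc 1 k,
        (-2 * (i : ℝ)) * φ i * lam ^ (-2 * (i : ℤ)))
    (hP : ∀ k, P k = lam ^ (2 * (k : ℤ)) * ∑ i ∈ Finset.Icc 1 k,
        φ i * lam ^ (-2 * (i : ℤ))) :
    (∀ k, 2 ≤ k → k ≤ N →
        Jhat k = lam ^ 2 * (Jhat (k - 1) + 2 * J (k - 1)) +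
          ψ k * (R k + 2 * (k : ℝ) * P k)) ∧
    Jhat 1 = 0 :=
  Jhat1_recurrence_general N lam φ ψ Jhat J R P hJhat hJ hR hP
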